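/- arXiv:1903.09928 — 2 statements merged into one kernel-verified Lean document; each statement's English description precedes it below -/
import Mathlib

section
/- Let (ψ_j)_{j∈J} be a C-controlled Bessel sequence in a Hilbert space H with bound B, where C is positive invertible, C commutes with the controlled frame operator S_C, and R(S_C^(1/2)) ⊆ R((C S_C)^(1/2)). Then the synthesis operator U : ℓ²(J) → H defined by U((a_j)) = ∑_j a_j C ψ_j is a well-defined bounded operator with ‖U‖ ≤ √B · ‖C^(1/2)‖. -/
/-!
Writing `S = S_C`, the sequence `v_j = C ψ_j` satisfies `∑ |⟨C ψ_j, f⟩|² = ⟨f, S C f⟩`. Since `C`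
commutes with `S`, so does `C^(1/2)`, and the controlled Bessel inequality gives
`⟨f, S C f⟩ = ⟨C^(1/2) f, S C^(1/2) f⟩ ≤ B ‖C^(1/2) f‖²`. Hence `(v_j)` is an ordinary Bessel
sequence with bound `B ‖C^(1/2)‖²`: its analysis operator `f ↦ (⟨v_j, f⟩)_j` into `ℓ²` has norm at
most `√B ‖C^(1/2)‖`, and its adjoint sends `a = ∑ a_j e_j` to `∑ a_j v_j`.
-/

open ContinuousLinearMap
open scoped ComplexOrder InnerProductSpace

theorem Commute.of_nonneg_mul_self_left {A : Type*} [CStarAlgebra A] [PartialOrder A]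
    [StarOrderedRing A] {a b r : A} (hr : 0 ≤ r) (hra : r * r = a) (hab : Commute a b) :
    Commute r b := by
  rw [← CFC.sqrt_unique hra hr, CFC.sqrt_eq_cfc]
  exact hab.cfc_nnreal _

section Bessel

variable {𝕜 H ι : Type*} [RCLike 𝕜] [NormedAddCommGroup H] [InnerProductSpace 𝕜 H]

theorem exists_analysisOperator_of_bessel (v : ι → H) {M : ℝ} (hM : 0 ≤ M)
    (hsum : ∀ f, Summable fun j => ‖⟪v j, f⟫_𝕜‖ ^ 2)
    (hle : ∀ f, ∑' j, ‖⟪v j, f⟫_𝕜‖ ^ 2 ≤ M ^ 2 * ‖f‖ ^ 2) :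
    ∃ T : H →L[𝕜] lp (fun _ : ι => 𝕜) 2, (∀ f j, T f j = ⟪v j, f⟫_𝕜) ∧ ‖T‖ ≤ M := by
  have hp : 0 < (2 : ENNReal).toReal := by norm_num
  let T : H →ₗ[𝕜] lp (fun _ : ι => 𝕜) 2 :=
    { toFun := fun f => ⟨fun j => ⟪v j, f⟫_𝕜, memℓp_gen (by simpa using hsum f)⟩
      map_add' := fun f g => lp.ext <| funext fun j => inner_add_right _ _ _
      map_smul' := fun c f => lp.ext <| funext fun j => inner_smul_right _ _ _ }
  have hT : ∀ f, ‖T f‖ ≤ M * ‖f‖ := fun f =>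
    lp.norm_le_of_tsum_le hp (by positivity) <| by
      simp only [ENNReal.toReal_ofNat, Real.rpow_two, mul_pow]
      exact hle f
  exact ⟨T.mkContinuous M hT, fun f j => rfl, T.mkContinuous_norm_le hM hT⟩

variable [CompleteSpace H]

theorem exists_synthesisOperator_of_bessel (v : ι → H) {M : ℝ} (hM : 0 ≤ M)
    (hsum : ∀ f, Summable fun j => ‖⟪v j, f⟫_𝕜‖ ^ 2)
    (hle : ∀ f, ∑' j, ‖⟪v j, f⟫_𝕜‖ ^ 2 ≤ M ^ 2 * ‖f‖ ^ 2) :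
    ∃ U : lp (fun _ : ι => 𝕜) 2 →L[𝕜] H,
      (∀ a : lp (fun _ : ι => 𝕜) 2, HasSum (fun j => a j • v j) (U a)) ∧ ‖U‖ ≤ M := by
  classical
  obtain ⟨T, hTv, hTM⟩ := exists_analysisOperator_of_bessel v hM hsum hle
  have hU_single : ∀ j c, T.adjoint (lp.single 2 j c) = c • v j := fun j c =>
    ext_inner_right 𝕜 fun f => by
      rw [adjoint_inner_left, lp.inner_single_left, hTv, inner_smul_left, RCLike.inner_apply,
        mul_comm]
  refine ⟨T.adjoint, fun a => ?_, by rwa [adjoint.norm_map]⟩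
  simpa only [hU_single] using (lp.hasSum_single (by norm_num) a).mapL T.adjoint

end Bessel

section ControlledBessel

variable {𝕜 H J : Type*} [RCLike 𝕜] [NormedAddCommGroup H] [InnerProductSpace 𝕜 H]
  {C S : H →L[𝕜] H} {ψ : J → H}

theorem hasSum_inner_mul_inner_of_hasSum_frameOp
    (hS : ∀ f, HasSum (fun j => ⟪ψ j, f⟫_𝕜 • C (ψ j)) (S f)) (f g : H) :
    HasSum (fun j => ⟪ψ j, g⟫_𝕜 * ⟪f, C (ψ j)⟫_𝕜) ⟪f, S g⟫_𝕜 := by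
  simpa only [innerSL_apply_apply, inner_smul_right, mul_comm] using (hS g).mapL (innerSL 𝕜 f)

theorem hasSum_norm_inner_sq_of_hasSum_frameOp (hC : (C : H →ₗ[𝕜] H).IsSymmetric)
    (hS : ∀ f, HasSum (fun j => ⟪ψ j, f⟫_𝕜 • C (ψ j)) (S f)) (f : H) :
    HasSum (fun j => ‖⟪C (ψ j), f⟫_𝕜‖ ^ 2) (RCLike.re ⟪f, S (C f)⟫_𝕜) := by
  have h := (hasSum_inner_mul_inner_of_hasSum_frameOp hS f (C f)).mapL RCLike.reCLM
  refine h.congr_fun fun j => ?_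
  rw [← hC.apply_clm, ← inner_conj_symm f, RCLike.mul_conj]
  simp

end ControlledBessel

section ComplexControlledBessel

variable {H J : Type*} [NormedAddCommGroup H] [InnerProductSpace ℂ H]
  {C S : H →L[ℂ] H} {ψ : J → H}

theorem re_inner_frameOp_le_of_bessel {B : ℝ}
    (hS : ∀ f, HasSum (fun j => ⟪ψ j, f⟫_ℂ • C (ψ j)) (S f))
    (hB : ∀ f, (∑' j, ⟪f, ψ j⟫_ℂ * ⟪C (ψ j), f⟫_ℂ) ≤ (B : ℂ) * ⟪f, f⟫_ℂ) (f : H) :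
    (⟪f, S f⟫_ℂ).re ≤ B * ‖f‖ ^ 2 := by
  have h := (hasSum_inner_mul_inner_of_hasSum_frameOp hS f f).star
  simp only [star_mul', Complex.star_def, inner_conj_symm] at h
  have := (Complex.le_def.mp (hB f)).1
  rw [h.tsum_eq, ← Complex.conj_re, inner_conj_symm] at this
  simpa [Complex.mul_re, ← inner_self_eq_norm_sq (𝕜 := ℂ) f] using this

theorem re_inner_frameOp_mul_le_of_bessel {R : H →L[ℂ] H} {B : ℝ}
    (hR : (R : H →ₗ[ℂ] H).IsSymmetric) (hRC : R * R = C) (hRS : Commute R S)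
    (hS : ∀ f, HasSum (fun j => ⟪ψ j, f⟫_ℂ • C (ψ j)) (S f))
    (hBessel : ∀ f, (∑' j, ⟪f, ψ j⟫_ℂ * ⟪C (ψ j), f⟫_ℂ) ≤ (B : ℂ) * ⟪f, f⟫_ℂ) (hB : 0 ≤ B)
    (f : H) : (⟪f, S (C f)⟫_ℂ).re ≤ B * ‖R‖ ^ 2 * ‖f‖ ^ 2 := by
  have hRSR : ⟪f, S (C f)⟫_ℂ = ⟪R f, S (R f)⟫_ℂ := by
    rw [← hRC, mul_apply_eq_comp, ← mul_apply_eq_comp S R, ← hRS.eq,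
      mul_apply_eq_comp, ← hR.apply_clm]
  calc (⟪f, S (C f)⟫_ℂ).re = (⟪R f, S (R f)⟫_ℂ).re := by rw [hRSR]
    _ ≤ B * ‖R f‖ ^ 2 := re_inner_frameOp_le_of_bessel hS hBessel (R f)
    _ ≤ B * (‖R‖ * ‖f‖) ^ 2 := by gcongr; exact R.le_opNorm f
    _ = B * ‖R‖ ^ 2 * ‖f‖ ^ 2 := by ring

end ComplexControlledBessel

theorem stmt_5_general {H : Type*} [NormedAddCommGroup H] [InnerProductSpace ℂ H] [CompleteSpace H]
    {J : Type*} (C SC sqrtC : H →L[ℂ] H) (ψ : J → H)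
    (hC : C.IsPositive)
    (hsqrtC_pos : sqrtC.IsPositive) (hsqrtC_sq : sqrtC * sqrtC = C)
    (B : ℝ) (hB : 0 < B)
    (hBessel : ∀ f : H,
      (∑' j, (inner ℂ f (ψ j) : ℂ) * (inner ℂ (C (ψ j)) f : ℂ)) ≤ (B : ℂ) * inner ℂ f f)
    (hSC : ∀ f : H, HasSum (fun j => (inner ℂ (ψ j) f : ℂ) • C (ψ j)) (SC f))
    (hcomm : C * SC = SC * C) :
    ∃ U : lp (fun _ : J => ℂ) 2 →L[ℂ] H,
      (∀ a : lp (fun _ : J => ℂ) 2, HasSum (fun j => a j • C (ψ j)) (U a)) ∧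
        ‖U‖ ≤ Real.sqrt B * ‖sqrtC‖ := by
  have hsqrtC_comm : Commute sqrtC SC :=
    .of_nonneg_mul_self_left ((nonneg_iff_isPositive _).mpr hsqrtC_pos) hsqrtC_sq hcomm
  have hsum (f : H) : HasSum (fun j => ‖⟪C (ψ j), f⟫_ℂ‖ ^ 2) (RCLike.re ⟪f, SC (C f)⟫_ℂ) :=
    hasSum_norm_inner_sq_of_hasSum_frameOp hC.isSymmetric hSC f
  have hle (f : H) : RCLike.re ⟪f, SC (C f)⟫_ℂ ≤ (√B * ‖sqrtC‖) ^ 2 * ‖f‖ ^ 2 := by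
    rw [mul_pow, Real.sq_sqrt hB.le]
    exact re_inner_frameOp_mul_le_of_bessel hsqrtC_pos.isSymmetric hsqrtC_sq hsqrtC_comm hSC
      hBessel hB.le f
  exact exists_synthesisOperator_of_bessel _ (by positivity) (fun f => (hsum f).summable)
    fun f => (hsum f).tsum_eq ▸ hle f

/-- For a `C`-controlled Bessel sequence with bound `B`, the synthesis operator
`U(a) = ∑_j a_j C ψ_j` is well defined and bounded with `‖U‖ ≤ √B ‖C^(1/2)‖`. -/
theorem stmt_5 {H : Type*} [NormedAddCommGroup H] [InnerProductSpace ℂ H] [CompleteSpace H]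
    {J : Type*} [Countable J] (C SC sqrtC sqrtSC sqrtCSC : H →L[ℂ] H) (ψ : J → H)
    (hC : C.IsPositive) (hCinv : IsUnit C)
    (hsqrtC_pos : sqrtC.IsPositive) (hsqrtC_sq : sqrtC * sqrtC = C)
    (B : ℝ) (hB : 0 < B)
    (hsum : ∀ f : H, Summable fun j => (inner ℂ f (ψ j) : ℂ) * (inner ℂ (C (ψ j)) f : ℂ))
    (hBessel : ∀ f : H,
      (∑' j, (inner ℂ f (ψ j) : ℂ) * (inner ℂ (C (ψ j)) f : ℂ)) ≤ (B : ℂ) * inner ℂ f f)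
    (hSC : ∀ f : H, HasSum (fun j => (inner ℂ (ψ j) f : ℂ) • C (ψ j)) (SC f))
    (hcomm : C * SC = SC * C)
    (hsqrtSC_pos : sqrtSC.IsPositive) (hsqrtSC_sq : sqrtSC * sqrtSC = SC)
    (hsqrtCSC_pos : sqrtCSC.IsPositive) (hsqrtCSC_sq : sqrtCSC * sqrtCSC = C * SC)
    (hrange : Set.range sqrtSC ⊆ Set.range sqrtCSC) :
    ∃ U : lp (fun _ : J => ℂ) 2 →L[ℂ] H,
      (∀ a : lp (fun _ : J => ℂ) 2, HasSum (fun j => a j • C (ψ j)) (U a)) ∧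
        ‖U‖ ≤ Real.sqrt B * ‖sqrtC‖ :=
  stmt_5_general C SC sqrtC ψ hC hsqrtC_pos hsqrtC_sq B hB hBessel hSC hcomm
end

section
/- Let (ψ_j)_{j∈J} be a C-controlled K-frame for a Hilbert space H with bounds A and B. Let M, K be bounded operators with R(M) ⊆ R(K) and C commuting with both M and K. Then (ψ_j) is a C-controlled M-frame for H with bounds A/λ' and B, where λ' > 0 satisfies M M* ≤ λ' K K* (such λ' exists by Douglas' theorem). -/
open ContinuousLinearMap
open scoped ComplexOrder

/-!
By Douglas' lemma, `R(M) ⊆ R(K)` gives `c > 0` with `‖M* f‖ ≤ c ‖K* f‖`, i.e. `M M* ≤ c² K K*`.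
The square root `S` of `C` is invertible because `S * S = C` is, so `M S*` and `K S*` have the same
ranges as `M` and `K`; Douglas' lemma applied to them gives `‖S M* f‖ ≤ c ‖S K* f‖`,
and this turns the lower frame bound `A` for `K` into the lower bound `A / c²` for `M`.
-/

open Filter Topology

namespace ContinuousLinearMap

variable {𝕜 E F G : Type*} [RCLike 𝕜] [NormedAddCommGroup E] [NormedAddCommGroup F]
  [NormedAddCommGroup G] [InnerProductSpace 𝕜 G]

theorem injective_comp_subtypeL_orthogonal_ker [NormedSpace 𝕜 F] (K : G →L[𝕜] F) :
    Function.Injective (K ∘L K.kerᗮ.subtypeL) := by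
  intro x y hxy
  have hmem : (x : G) - y ∈ K.ker ⊓ K.kerᗮ :=
    ⟨by simpa [sub_eq_zero] using hxy, K.kerᗮ.sub_mem x.2 y.2⟩
  rw [Submodule.inf_orthogonal_eq_bot, Submodule.mem_bot, sub_eq_zero] at hmem
  exact Subtype.ext hmem

theorem range_comp_subtypeL_orthogonal_ker [NormedSpace 𝕜 F] [CompleteSpace G] (K : G →L[𝕜] F) :
    Set.range (K ∘L K.kerᗮ.subtypeL) = Set.range K := by
  refine (Set.range_comp_subset_range _ (K : G → F)).antisymm ?_
  rintro _ ⟨x, rfl⟩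
  have hx : x ∈ K.ker ⊔ K.kerᗮ := by
    rw [Submodule.sup_orthogonal_of_hasOrthogonalProjection]; trivial
  obtain ⟨y, hy, z, hz, rfl⟩ := Submodule.mem_sup.mp hx
  exact ⟨⟨z, hz⟩, by simp [show K y = 0 from hy]⟩

/-- Douglas' factorization: the solution of `K X = M` is taken with values in `(ker K)ᗮ`, where
it is unique, and it is bounded by the closed graph theorem. -/
theorem exists_comp_eq_of_range_subset [NormedSpace 𝕜 E] [CompleteSpace E] [NormedSpace 𝕜 F]
    [CompleteSpace G] (M : E →L[𝕜] F) (K : G →L[𝕜] F) (hMK : Set.range M ⊆ Set.range K) :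
    ∃ X : E →L[𝕜] G, K ∘L X = M := by
  set K₀ := K ∘L K.kerᗮ.subtypeL
  have hK₀ : Function.Injective K₀ := K.injective_comp_subtypeL_orthogonal_ker
  have hM : ∀ x, M x ∈ LinearMap.range (K₀ : K.kerᗮ →ₗ[𝕜] F) := fun x => by
    have hx := hMK ⟨x, rfl⟩
    rw [← K.range_comp_subtypeL_orthogonal_ker] at hx
    exact LinearMap.mem_range.mpr hx
  set X₀ : E →ₗ[𝕜] K.kerᗮ := (LinearEquiv.ofInjective (K₀ : K.kerᗮ →ₗ[𝕜] F) hK₀).symm ∘ₗ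
    (M : E →ₗ[𝕜] F).codRestrict _ hM
  have hKX₀ : ∀ x, K₀ (X₀ x) = M x := fun x =>
    LinearEquiv.ofInjective_symm_apply (K₀ : K.kerᗮ →ₗ[𝕜] F) (h := hK₀) _
  have hgraph : ∀ (u : ℕ → E) x y, Tendsto u atTop (𝓝 x) → Tendsto (X₀ ∘ u) atTop (𝓝 y) →
      y = X₀ x := fun u x y hu hX₀u => hK₀ <| by
    refine tendsto_nhds_unique ((K₀.continuous.tendsto y).comp hX₀u) ?_
    simpa [Function.comp_def, hKX₀] using (M.continuous.tendsto x).comp hu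
  exact ⟨K.kerᗮ.subtypeL ∘L ofSeqClosedGraph hgraph, ContinuousLinearMap.ext hKX₀⟩

theorem exists_norm_adjoint_apply_le_of_range_subset [InnerProductSpace 𝕜 E] [CompleteSpace E]
    [InnerProductSpace 𝕜 F] [CompleteSpace F] [CompleteSpace G] (M : E →L[𝕜] F) (K : G →L[𝕜] F)
    (hMK : Set.range M ⊆ Set.range K) :
    ∃ c > (0 : ℝ), ∀ f, ‖adjoint M f‖ ≤ c * ‖adjoint K f‖ := by
  obtain ⟨X, rfl⟩ := exists_comp_eq_of_range_subset M K hMK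
  refine ⟨‖adjoint X‖ + 1, by positivity, fun f => ?_⟩
  rw [adjoint_comp, comp_apply]
  exact (le_opNorm _ _).trans (by gcongr; linarith)

end ContinuousLinearMap

section Complex

variable {E F : Type*} [NormedAddCommGroup E] [InnerProductSpace ℂ E]
  [NormedAddCommGroup F] [InnerProductSpace ℂ F]

theorem isPositive_sq_smul_comp_adjoint_sub_of_norm_adjoint_apply_le {G : Type*}
    [NormedAddCommGroup G] [InnerProductSpace ℂ G] [CompleteSpace E] [CompleteSpace F]
    [CompleteSpace G] (M : E →L[ℂ] F) (K : G →L[ℂ] F) {c : ℝ}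
    (h : ∀ f, ‖adjoint M f‖ ≤ c * ‖adjoint K f‖) :
    (c ^ 2 • (K ∘L adjoint K) - M ∘L adjoint M).IsPositive := by
  refine isPositive_def'.mpr ⟨?_, fun f => ?_⟩
  · exact ((IsSelfAdjoint.all _).smul (isPositive_self_comp_adjoint K).isSelfAdjoint).sub
      (isPositive_self_comp_adjoint M).isSelfAdjoint
  have hK : ‖adjoint K f‖ ^ 2 = RCLike.re (inner ℂ ((K ∘L adjoint K) f) f) := by
    rw [apply_norm_sq_eq_inner_adjoint_left, adjoint_adjoint]
  have hM : ‖adjoint M f‖ ^ 2 = RCLike.re (inner ℂ ((M ∘L adjoint M) f) f) := by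
    rw [apply_norm_sq_eq_inner_adjoint_left, adjoint_adjoint]
  have hMK : ‖adjoint M f‖ ^ 2 ≤ c ^ 2 * ‖adjoint K f‖ ^ 2 := by
    rw [← mul_pow]; exact pow_le_pow_left₀ (norm_nonneg _) (h f) 2
  rw [reApplyInnerSelf_apply, sub_apply, inner_sub_left, map_sub, smul_apply,
    ← Complex.coe_smul, inner_smul_left, Complex.conj_ofReal]
  simp only [RCLike.re_to_complex, Complex.re_ofReal_mul] at hK hM ⊢
  rw [← hK, ← hM]
  linarith

theorem ofReal_div_sq_mul_inner_self_le {x : E} {y : F} {A c : ℝ} (hA : 0 ≤ A)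
    (h : ‖x‖ ≤ c * ‖y‖) : ((A / c ^ 2 : ℝ) : ℂ) * inner ℂ x x ≤ (A : ℂ) * inner ℂ y y := by
  have hx : inner ℂ x x = ((‖x‖ ^ 2 : ℝ) : ℂ) := by exact_mod_cast inner_self_eq_norm_sq_to_K x
  have hy : inner ℂ y y = ((‖y‖ ^ 2 : ℝ) : ℂ) := by exact_mod_cast inner_self_eq_norm_sq_to_K y
  rw [hx, hy, ← Complex.ofReal_mul, ← Complex.ofReal_mul, Complex.real_le_real]
  calc A / c ^ 2 * ‖x‖ ^ 2 ≤ A / c ^ 2 * (c * ‖y‖) ^ 2 := by gcongr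
    _ = A * (c ^ 2 / c ^ 2) * ‖y‖ ^ 2 := by ring
    _ ≤ A * ‖y‖ ^ 2 := by gcongr; exact mul_le_of_le_one_right hA (div_self_le_one _)

end Complex

theorem stmt_11_general {H : Type*} [NormedAddCommGroup H] [InnerProductSpace ℂ H] [CompleteSpace H]
    {J : Type*} (C K M sqrtC : H →L[ℂ] H) (ψ : J → H)
    (hCinv : IsUnit C)
    (hsqrtC_sq : sqrtC * sqrtC = C)
    (hrange : Set.range M ⊆ Set.range K)
    (A B : ℝ) (hA : 0 < A)
    (hframe : ∀ f : H,
      (A : ℂ) * inner ℂ (sqrtC (adjoint K f)) (sqrtC (adjoint K f)) ≤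
          ∑' j, (inner ℂ f (ψ j) : ℂ) * (inner ℂ (C (ψ j)) f : ℂ) ∧
        (∑' j, (inner ℂ f (ψ j) : ℂ) * (inner ℂ (C (ψ j)) f : ℂ)) ≤ (B : ℂ) * inner ℂ f f) :
    ∃ lam > (0 : ℝ),
      (lam • (K * adjoint K) - M * adjoint M).IsPositive ∧
        ∀ f : H,
          ((A / lam : ℝ) : ℂ) * inner ℂ (sqrtC (adjoint M f)) (sqrtC (adjoint M f)) ≤
              ∑' j, (inner ℂ f (ψ j) : ℂ) * (inner ℂ (C (ψ j)) f : ℂ) ∧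
            (∑' j, (inner ℂ f (ψ j) : ℂ) * (inner ℂ (C (ψ j)) f : ℂ)) ≤ (B : ℂ) * inner ℂ f f := by
  have hsurj : Function.Surjective (adjoint sqrtC) := by
    rw [← star_eq_adjoint]
    exact (isUnit_iff_bijective.mp (isUnit_mul_self_iff.mp (hsqrtC_sq ▸ hCinv)).star).surjective
  obtain ⟨c₁, hc₁, hMK⟩ := exists_norm_adjoint_apply_le_of_range_subset M K hrange
  obtain ⟨c₂, -, hMK_sqrtC⟩ := exists_norm_adjoint_apply_le_of_range_subset
    (M ∘L adjoint sqrtC) (K ∘L adjoint sqrtC)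
    (by rwa [coe_comp, coe_comp, hsurj.range_comp, hsurj.range_comp])
  simp only [adjoint_comp, adjoint_adjoint, comp_apply] at hMK_sqrtC
  set c := max c₁ c₂
  have hc : 0 < c := lt_max_of_lt_left hc₁
  refine ⟨c ^ 2, by positivity,
    isPositive_sq_smul_comp_adjoint_sub_of_norm_adjoint_apply_le M K fun f => ?_,
    fun f => ⟨?_, (hframe f).2⟩⟩
  · exact (hMK f).trans (by gcongr; exact le_max_left _ _)
  · refine (ofReal_div_sq_mul_inner_self_le hA.le ?_).trans (hframe f).1
    exact (hMK_sqrtC f).trans (by gcongr; exact le_max_right _ _)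

/-- If `(ψ_j)` is a `C`-controlled `K`-frame with bounds `A, B`, `R(M) ⊆ R(K)` and `C`
commutes with `M` and `K`, then `(ψ_j)` is a `C`-controlled `M`-frame with bounds
`A/λ'` and `B`, where `λ' > 0` satisfies `M M* ≤ λ' K K*`. -/
theorem stmt_11 {H : Type*} [NormedAddCommGroup H] [InnerProductSpace ℂ H] [CompleteSpace H]
    {J : Type*} [Countable J] (C K M sqrtC : H →L[ℂ] H) (ψ : J → H)
    (hC : C.IsPositive) (hCinv : IsUnit C)
    (hcommK : K * C = C * K) (hcommM : M * C = C * M)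
    (hsqrtC_pos : sqrtC.IsPositive) (hsqrtC_sq : sqrtC * sqrtC = C)
    (hrange : Set.range M ⊆ Set.range K)
    (A B : ℝ) (hA : 0 < A) (hAB : A ≤ B)
    (hsum : ∀ f : H, Summable fun j => (inner ℂ f (ψ j) : ℂ) * (inner ℂ (C (ψ j)) f : ℂ))
    (hframe : ∀ f : H,
      (A : ℂ) * inner ℂ (sqrtC (adjoint K f)) (sqrtC (adjoint K f)) ≤
          ∑' j, (inner ℂ f (ψ j) : ℂ) * (inner ℂ (C (ψ j)) f : ℂ) ∧
        (∑' j, (inner ℂ f (ψ j) : ℂ) * (inner ℂ (C (ψ j)) f : ℂ)) ≤ (B : ℂ) * inner ℂ f f) :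
    ∃ lam > (0 : ℝ),
      (lam • (K * adjoint K) - M * adjoint M).IsPositive ∧
        ∀ f : H,
          ((A / lam : ℝ) : ℂ) * inner ℂ (sqrtC (adjoint M f)) (sqrtC (adjoint M f)) ≤
              ∑' j, (inner ℂ f (ψ j) : ℂ) * (inner ℂ (C (ψ j)) f : ℂ) ∧
            (∑' j, (inner ℂ f (ψ j) : ℂ) * (inner ℂ (C (ψ j)) f : ℂ)) ≤ (B : ℂ) * inner ℂ f f :=
  stmt_11_general C K M sqrtC ψ hCinv hsqrtC_sq hrange A B hA hframe
end
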